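/- arXiv:2511.16171 — 2 statements merged into one kernel-verified Lean document; each statement's English description precedes it below -/
import Mathlib

section
/- Let Ω ⊂ ℝ^d be a nonempty bounded open set, Y a normed vector space, A : L²(Ω) → Y a continuous (possibly nonlinear) map, and g ∈ Y. Then for every integer n ≥ 1 and every r > 0 there exists f* ∈ X_{n,r} such that ‖A(f*) − g‖_Y ≤ ‖A(f) − g‖_Y for all f ∈ X_{n,r}; that is, the residual functional f ↦ ‖A(f) − g‖_Y attains its minimum over the network class X_{n,r}. -/
open MeasureTheory Filter Topology Bornology

noncomputable section

/-- Parameter of a single neuron: `(a, b, c)`. -/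
abbrev NNParam (d : ℕ) : Type := ℝ × (Fin d → ℝ) × ℝ

/-- ℓ¹ norm on `ℝ^d`. -/
def l1 {d : ℕ} (b : Fin d → ℝ) : ℝ := ∑ i, |b i|

/-- The two-layer ReLU network with parameters `θ`. -/
def netFun {d n : ℕ} (θ : Fin n → NNParam d) : (Fin d → ℝ) → ℝ :=
  fun x => (1 / (n : ℝ)) * ∑ j, (θ j).1 * max (∑ i, (θ j).2.1 i * x i + (θ j).2.2) 0

theorem netFun_continuous {d n : ℕ} (θ : Fin n → NNParam d) : Continuous (netFun θ) := by
  unfold netFun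
  refine continuous_const.mul (continuous_finset_sum _ fun j _ => continuous_const.mul ?_)
  exact ((continuous_finset_sum _ fun i _ =>
    (continuous_const.mul (continuous_apply i))).add continuous_const).max continuous_const

/-- Membership of a single-neuron parameter in the set `M_r`. -/
def memMr {d : ℕ} (r : ℝ) (p : NNParam d) : Prop :=
  |p.1| ≤ r ∧ l1 p.2.1 + |p.2.2| = 1

theorem memLp_net {d n : ℕ} {Ω : Set (Fin d → ℝ)} (hΩo : IsOpen Ω) (hΩb : IsBounded Ω)
    (θ : Fin n → NNParam d) : MemLp (netFun θ) 2 (volume.restrict Ω) := by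
  have hc := netFun_continuous θ
  obtain ⟨C, hC⟩ := hΩb.isCompact_closure.exists_bound_of_continuousOn hc.continuousOn
  haveI : Fact (volume Ω < ⊤) := ⟨hΩb.measure_lt_top⟩
  refine MemLp.of_bound (hc.aestronglyMeasurable.restrict) C ?_
  filter_upwards [ae_restrict_mem hΩo.measurableSet] with x hx
  exact hC x (subset_closure hx)

/-- The two-layer ReLU network with parameters `θ`, as an element of `L²(Ω)`. -/
def netLp {d n : ℕ} (Ω : Set (Fin d → ℝ)) (hΩo : IsOpen Ω) (hΩb : IsBounded Ω)
    (θ : Fin n → NNParam d) : Lp ℝ 2 (volume.restrict Ω) :=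
  (memLp_net hΩo hΩb θ).toLp (netFun θ)

/-- The class `X_{n,r}` of width-`n` networks with parameters in `M_r`, inside `L²(Ω)`. -/
def Xlp {d : ℕ} (Ω : Set (Fin d → ℝ)) (hΩo : IsOpen Ω) (hΩb : IsBounded Ω)
    (n : ℕ) (r : ℝ) : Set (Lp ℝ 2 (volume.restrict Ω)) :=
  {f | ∃ θ : Fin n → NNParam d, (∀ j, memMr r (θ j)) ∧ f = netLp Ω hΩo hΩb θ}

/-! `X_{n,r}` is the image of the compact parameter set `M_rⁿ` under `θ ↦ f_θ`. This map is
continuous into `L²(Ω)`: `f_θ(x)` is jointly continuous in `(θ, x)`, so `f_θ → f_{θ₀}` uniformly on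
the compact set `closure Ω`, which has finite measure. Hence `X_{n,r}` is compact and the continuous
residual attains its minimum on it. -/

open Set

theorem continuous_toLp_of_continuousOn_uncurry {P α E : Type*} [TopologicalSpace P]
    [TopologicalSpace α] [MeasurableSpace α] [NormedAddCommGroup E] {p : ENNReal} [Fact (1 ≤ p)]
    {μ : Measure α} [IsFiniteMeasure μ] {K : Set α} (hK : IsCompact K) (hμK : ∀ᵐ x ∂μ, x ∈ K)
    {F : P → α → E} (hF : ContinuousOn ↿F (univ ×ˢ K)) (hFp : ∀ θ, MemLp (F θ) p μ) :
    Continuous fun θ ↦ (hFp θ).toLp (F θ) := by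
  rw [Metric.continuous_iff']
  intro θ₀ ε hε
  set V : ℝ := (measureUnivNNReal μ : ℝ) ^ p.toReal⁻¹
  have hV : 0 ≤ V := by positivity
  have hδ : 0 < ε / (V + 1) := by positivity
  obtain ⟨v, hv, hvF⟩ :=
    hK.mem_uniformity_of_prod hF (mem_univ θ₀) (Metric.dist_mem_uniformity hδ)
  rw [nhdsWithin_univ] at hv
  filter_upwards [hv] with θ hθ
  have hbound : ∀ᵐ x ∂μ, ‖((hFp θ).sub (hFp θ₀)).toLp (F θ - F θ₀) x‖ ≤ ε / (V + 1) := by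
    filter_upwards [MemLp.coeFn_toLp ((hFp θ).sub (hFp θ₀)), hμK] with x hx hxK
    rw [hx, Pi.sub_apply, ← dist_eq_norm]
    exact (hvF θ hθ x hxK).le
  calc dist ((hFp θ).toLp (F θ)) ((hFp θ₀).toLp (F θ₀))
      = ‖((hFp θ).sub (hFp θ₀)).toLp (F θ - F θ₀)‖ := by
        rw [dist_eq_norm, MemLp.toLp_sub]
    _ ≤ V * (ε / (V + 1)) := Lp.norm_le_of_ae_bound hδ.le hbound
    _ < ε := by
        rw [mul_div_assoc', div_lt_iff₀ (by positivity)]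
        nlinarith

theorem continuous_uncurry_netFun {d n : ℕ} : Continuous ↿(netFun (d := d) (n := n)) := by
  unfold netFun
  fun_prop

theorem continuous_netLp {d n : ℕ} {Ω : Set (Fin d → ℝ)} (hΩo : IsOpen Ω) (hΩb : IsBounded Ω) :
    Continuous (netLp (n := n) Ω hΩo hΩb) := by
  have : IsFiniteMeasure (volume.restrict Ω) := isFiniteMeasure_restrict.2 hΩb.measure_lt_top.ne
  refine continuous_toLp_of_continuousOn_uncurry hΩb.isCompact_closure ?_
    continuous_uncurry_netFun.continuousOn _
  filter_upwards [ae_restrict_mem hΩo.measurableSet] with x hx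
  exact subset_closure hx

theorem norm_le_l1 {d : ℕ} (b : Fin d → ℝ) : ‖b‖ ≤ l1 b :=
  (pi_norm_le_iff_of_nonneg (Finset.sum_nonneg fun i _ ↦ abs_nonneg (b i))).2 fun i ↦
    Finset.single_le_sum (f := fun i ↦ |b i|) (fun i _ ↦ abs_nonneg (b i)) (Finset.mem_univ i)

theorem isCompact_setOf_memMr {d : ℕ} (r : ℝ) : IsCompact {p : NNParam d | memMr r p} := by
  refine Metric.isCompact_of_isClosed_isBounded ?_ ((Metric.isBounded_closedBall (x := 0)
    (r := max r 1)).subset ?_)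
  · have hl1 : Continuous fun p : NNParam d ↦ l1 p.2.1 + |p.2.2| := by unfold l1; fun_prop
    exact (isClosed_le (by fun_prop : Continuous fun p : NNParam d ↦ |p.1|) continuous_const).inter
      (isClosed_eq hl1 continuous_const)
  · rintro ⟨a, b, c⟩ ⟨ha, hbc⟩
    have hb : ‖b‖ ≤ 1 := (norm_le_l1 b).trans (by linarith [abs_nonneg c])
    have hc : |c| ≤ 1 := by linarith [(norm_nonneg b).trans (norm_le_l1 b)]
    simp only [mem_closedBall_zero_iff, norm_prod_le_iff]
    exact ⟨ha.trans (le_max_left _ _), hb.trans (le_max_right _ _), hc.trans (le_max_right _ _)⟩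

theorem Xlp_eq_image {d : ℕ} (Ω : Set (Fin d → ℝ)) (hΩo : IsOpen Ω) (hΩb : IsBounded Ω)
    (n : ℕ) (r : ℝ) :
    Xlp Ω hΩo hΩb n r = netLp (n := n) Ω hΩo hΩb '' univ.pi fun _ ↦ {p : NNParam d | memMr r p} := by
  ext f
  simp only [Xlp, mem_image, mem_univ_pi, mem_ofPred_eq, eq_comm]

theorem isCompact_Xlp {d : ℕ} (Ω : Set (Fin d → ℝ)) (hΩo : IsOpen Ω) (hΩb : IsBounded Ω)
    (n : ℕ) (r : ℝ) : IsCompact (Xlp Ω hΩo hΩb n r) := by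
  rw [Xlp_eq_image]
  exact (isCompact_univ_pi fun _ ↦ isCompact_setOf_memMr r).image (continuous_netLp hΩo hΩb)

theorem Xlp_nonempty {d : ℕ} (Ω : Set (Fin d → ℝ)) (hΩo : IsOpen Ω) (hΩb : IsBounded Ω)
    (n : ℕ) {r : ℝ} (hr : 0 ≤ r) : (Xlp Ω hΩo hΩb n r).Nonempty :=
  ⟨_, fun _ ↦ (0, 0, 1), fun _ ↦ ⟨by simpa using hr, by simp [l1]⟩, rfl⟩

theorem residual_attains_min_on_network_class_general
    {d : ℕ} (Ω : Set (Fin d → ℝ)) (hΩo : IsOpen Ω)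
    (hΩb : IsBounded Ω)
    {Y : Type*} [NormedAddCommGroup Y]
    (A : Lp ℝ 2 (volume.restrict Ω) → Y) (hA : Continuous A) (g : Y)
    (n : ℕ) (r : ℝ) (hr : 0 < r) :
    ∃ fs ∈ Xlp Ω hΩo hΩb n r, ∀ f ∈ Xlp Ω hΩo hΩb n r, ‖A fs - g‖ ≤ ‖A f - g‖ :=
  (isCompact_Xlp Ω hΩo hΩb n r).exists_isMinOn (Xlp_nonempty Ω hΩo hΩb n hr.le)
    (hA.sub continuous_const).norm.continuousOn

/-- For a continuous (possibly nonlinear) map `A : L²(Ω) → Y` into a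
normed vector space and data `g ∈ Y`, the residual functional `f ↦ ‖A(f) − g‖` attains its
minimum over the network class `X_{n,r} ⊆ L²(Ω)`. -/
theorem residual_attains_min_on_network_class
    {d : ℕ} (hd : 1 ≤ d) (Ω : Set (Fin d → ℝ)) (hne : Ω.Nonempty) (hΩo : IsOpen Ω)
    (hΩb : IsBounded Ω)
    {Y : Type*} [NormedAddCommGroup Y] [NormedSpace ℝ Y]
    (A : Lp ℝ 2 (volume.restrict Ω) → Y) (hA : Continuous A) (g : Y)
    (n : ℕ) (hn : 1 ≤ n) (r : ℝ) (hr : 0 < r) :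
    ∃ fs ∈ Xlp Ω hΩo hΩb n r, ∀ f ∈ Xlp Ω hΩo hΩb n r, ‖A fs - g‖ ≤ ‖A f - g‖ :=
  residual_attains_min_on_network_class_general Ω hΩo hΩb A hA g n r hr

end
end

section
/- Let Ω ⊂ ℝ^d be a nonempty bounded open set, Y a normed vector space, A : L²(Ω) → Y a map, f† ∈ L²(Ω), and g := A(f†). Assume: (i) A is locally Hölder continuous at f† of order θ ∈ (0, 1]: there exist L_A > 0 and γ₁ > 0 with ‖A(f) − A(f†)‖_Y ≤ L_A·‖f − f†‖_{L²(Ω)}^θ whenever ‖f − f†‖_{L²(Ω)} < γ₁; (ii) R : L²(Ω) → [0, ∞) satisfies R(f†) < ∞ and is locally Hölder continuous at f† of the same order θ: there exist L_R > 0 and γ₂ > 0 with |R(f) − R(f†)| ≤ L_R·‖f − f†‖_{L²(Ω)}^θ whenever ‖f − f†‖_{L²(Ω)} < γ₂; (iii) there exists C₀ > 0 such that for every n ≥ 1 there is f_n ∈ X_{n, r(n)} with ‖f_n − f†‖_{L²(Ω)} ≤ C₀/√n, where r : ℕ → (0, ∞). Fix τ > 1 and c₀ > 0, and set β_n := c₀·n^{−θ/2}.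 Then there exists a constant C > 0 such that for every δ ∈ (0, 1], every g^δ ∈ Y with ‖g^δ − g‖_Y ≤ δ, and every integer n ≥ C·δ^{−2/θ}, one has inf_{f ∈ X_{n, r(n)}} ( ‖A(f) − g^δ‖_Y + β_n·R(f) ) ≤ τ·δ. Consequently, the discrepancy-principle stopping width of the modified expanding neural network method is O(δ^{−2/θ}) as δ → 0. -/
/-! Take the approximant `f_n ∈ X_{n,r(n)}` with `‖f_n - f†‖ ≤ C₀/√n`. Once `C₀/√n` is below
both Hölder radii, Hölder continuity of `A` and `R` bounds the penalized residual of `f_n` by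
`δ + K n^{-θ/2}` with `K = L_A C₀^θ + c₀ (R(f†) + L_R C₀^θ)`, using `n^{-θ} ≤ n^{-θ/2}`.
This is at most `τδ` as soon as `n ≥ (K/((τ-1)δ))^{2/θ} = (K/(τ-1))^{2/θ} δ^{-2/θ}`. -/

open MeasureTheory Filter Topology Bornology

noncomputable section

theorem Real.div_sqrt_rpow {c x : ℝ} (hc : 0 ≤ c) (hx : 0 ≤ x) (θ : ℝ) :
    (c / √x) ^ θ = c ^ θ * x ^ (-(θ / 2)) := by
  rw [Real.div_rpow hc (Real.sqrt_nonneg x), Real.sqrt_eq_rpow, ← Real.rpow_mul hx,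
    div_eq_mul_inv, Real.rpow_neg hx, one_div_mul_eq_div]

theorem Real.div_sqrt_lt_of_div_sq_lt {c γ x : ℝ} (hγ : 0 < γ) (h : (c / γ) ^ 2 < x) :
    c / √x < γ := by
  have hsqrt : c / γ < √x := Real.lt_sqrt_of_sq_lt h
  have hx : 0 < √x := (Real.sqrt_pos).2 ((sq_nonneg _).trans_lt h)
  rw [div_lt_iff₀ hx]
  rw [div_lt_iff₀ hγ] at hsqrt
  linarith

theorem Real.mul_rpow_neg_le_mul_of_le {a b δ p x : ℝ} (ha : 0 ≤ a) (hb : 0 < b) (hδ : 0 < δ)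
    (hp : 0 < p) (hx : 0 < x) (h : (a / b) ^ p⁻¹ * δ ^ (-p⁻¹) ≤ x) :
    a * x ^ (-p) ≤ b * δ := by
  have hsplit : (a / b) ^ p⁻¹ * δ ^ (-p⁻¹) = (a / (b * δ)) ^ p⁻¹ := by
    rw [Real.rpow_neg hδ.le, ← Real.inv_rpow hδ.le,
      ← Real.mul_rpow (by positivity) (by positivity), div_mul_eq_div_div, div_eq_mul_inv (a / b)]
  rw [hsplit, Real.rpow_inv_le_iff_of_pos (by positivity) hx.le hp,
    div_le_iff₀ (by positivity)] at h
  rw [Real.rpow_neg hx.le, ← div_eq_mul_inv, div_le_iff₀ (by positivity)]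
  linarith

theorem penalized_residual_le_of_norm_sub_le {E Y : Type*}
    [SeminormedAddCommGroup E] [SeminormedAddCommGroup Y]
    {A : E → Y} {R : E → ℝ} {f f₀ : E} {g : Y} {LA LR θ c₀ C₀ δ n : ℝ}
    (hθ : 0 < θ) (hLA : 0 ≤ LA) (hLR : 0 ≤ LR) (hc₀ : 0 ≤ c₀) (hC₀ : 0 ≤ C₀) (hn : 1 ≤ n)
    (hA : ‖A f - A f₀‖ ≤ LA * ‖f - f₀‖ ^ θ) (hR : |R f - R f₀| ≤ LR * ‖f - f₀‖ ^ θ)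
    (hg : ‖g - A f₀‖ ≤ δ) (hf : ‖f - f₀‖ ≤ C₀ / √n) :
    ‖A f - g‖ + c₀ * n ^ (-(θ / 2)) * R f
      ≤ δ + (LA * C₀ ^ θ + c₀ * (R f₀ + LR * C₀ ^ θ)) * n ^ (-(θ / 2)) := by
  set s := n ^ (-(θ / 2))
  have hs0 : 0 ≤ s := by positivity
  have hs1 : s ≤ 1 := Real.rpow_le_one_of_one_le_of_nonpos hn (by linarith)
  have hdist : ‖f - f₀‖ ^ θ ≤ C₀ ^ θ * s := by
    rw [← Real.div_sqrt_rpow hC₀ (by linarith)]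
    exact Real.rpow_le_rpow (norm_nonneg _) hf hθ.le
  have hresidual : ‖A f - g‖ ≤ δ + LA * (C₀ ^ θ * s) := by
    calc ‖A f - g‖ ≤ ‖A f - A f₀‖ + ‖A f₀ - g‖ := norm_sub_le_norm_sub_add_norm_sub _ _ _
      _ ≤ LA * (C₀ ^ θ * s) + δ := by
        rw [norm_sub_rev (A f₀)]
        gcongr
        exact hA.trans (by gcongr)
      _ = _ := add_comm _ _
  have hpenalty : R f ≤ R f₀ + LR * (C₀ ^ θ * s) := by
    have := mul_le_mul_of_nonneg_left hdist hLR
    linarith [(abs_le.1 hR).2]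
  have hss : c₀ * LR * C₀ ^ θ * (s * s) ≤ c₀ * LR * C₀ ^ θ * s :=
    mul_le_mul_of_nonneg_left (mul_le_of_le_one_left hs0 hs1) (by positivity)
  linarith [mul_le_mul_of_nonneg_left hpenalty (mul_nonneg hc₀ hs0)]

theorem csInf_setOf_exists_eq_le {α : Type*} {S : Set α} {F : α → ℝ}
    (hF : ∀ f ∈ S, 0 ≤ F f) {f : α} (hf : f ∈ S) : sInf {y | ∃ f ∈ S, y = F f} ≤ F f :=
  csInf_le ⟨0, by rintro _ ⟨g, hg, rfl⟩; exact hF g hg⟩ ⟨f, hf, rfl⟩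

theorem modified_discrepancy_principle_stopping_width_bound_general
    {d : ℕ} (Ω : Set (Fin d → ℝ)) (hΩo : IsOpen Ω)
    (hΩb : IsBounded Ω)
    {Y : Type*} [NormedAddCommGroup Y]
    (A : Lp ℝ 2 (volume.restrict Ω) → Y)
    (fdag : Lp ℝ 2 (volume.restrict Ω))
    (θh : ℝ) (hθ0 : 0 < θh)
    (LA γ₁ : ℝ) (hLA : 0 < LA) (hγ₁ : 0 < γ₁)
    (hAH : ∀ f : Lp ℝ 2 (volume.restrict Ω),
      ‖f - fdag‖ < γ₁ → ‖A f - A fdag‖ ≤ LA * ‖f - fdag‖ ^ θh)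
    (R : Lp ℝ 2 (volume.restrict Ω) → ℝ) (hR0 : ∀ f, 0 ≤ R f)
    (LR γ₂ : ℝ) (hLR : 0 < LR) (hγ₂ : 0 < γ₂)
    (hRH : ∀ f : Lp ℝ 2 (volume.restrict Ω),
      ‖f - fdag‖ < γ₂ → |R f - R fdag| ≤ LR * ‖f - fdag‖ ^ θh)
    (r : ℕ → ℝ)
    (C₀ : ℝ) (hC₀ : 0 < C₀)
    (happrox : ∀ n : ℕ, 1 ≤ n →
      ∃ f ∈ Xlp Ω hΩo hΩb n (r n), ‖f - fdag‖ ≤ C₀ / Real.sqrt n)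
    (τ : ℝ) (hτ : 1 < τ) (c₀ : ℝ) (hc₀ : 0 < c₀) :
    ∃ C : ℝ, 0 < C ∧
      ∀ δ : ℝ, 0 < δ → δ ≤ 1 → ∀ gδ : Y, ‖gδ - A fdag‖ ≤ δ →
        ∀ n : ℕ, C * δ ^ (-(2 / θh)) ≤ (n : ℝ) →
          sInf {y : ℝ | ∃ f ∈ Xlp Ω hΩo hΩb n (r n),
              y = ‖A f - gδ‖ + (c₀ * (n : ℝ) ^ (-(θh / 2))) * R f} ≤ τ * δ := by
  set K := LA * C₀ ^ θh + c₀ * (R fdag + LR * C₀ ^ θh)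
  have hK : 0 ≤ K :=
    add_nonneg (by positivity) (mul_nonneg hc₀.le (add_nonneg (hR0 fdag) (by positivity)))
  set C := max ((K / (τ - 1)) ^ (2 / θh)) ((C₀ / min γ₁ γ₂) ^ 2 + 1)
  have hC : 0 < C := by positivity
  refine ⟨C, hC, fun δ hδ hδ1 gδ hgδ n hn => ?_⟩
  have hδθ : 1 ≤ δ ^ (-(2 / θh)) :=
    Real.one_le_rpow_of_pos_of_le_one_of_nonpos hδ hδ1 (neg_nonpos.2 (by positivity))
  have hCγ : (C₀ / min γ₁ γ₂) ^ 2 + 1 ≤ C := le_max_right _ _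
  have hCn : C ≤ n := (le_mul_of_one_le_right hC.le hδθ).trans hn
  have hγn : (C₀ / min γ₁ γ₂) ^ 2 < n := by linarith
  have hn1 : (1 : ℝ) ≤ n := by linarith [sq_nonneg (C₀ / min γ₁ γ₂)]
  obtain ⟨f, hfX, hf⟩ := happrox n (by exact_mod_cast hn1)
  have hfγ : ‖f - fdag‖ < min γ₁ γ₂ :=
    hf.trans_lt (Real.div_sqrt_lt_of_div_sq_lt (lt_min hγ₁ hγ₂) hγn)
  have hKn : K * (n : ℝ) ^ (-(θh / 2)) ≤ (τ - 1) * δ := by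
    refine Real.mul_rpow_neg_le_mul_of_le hK (by linarith) hδ (by positivity) (by positivity) ?_
    rw [inv_div]
    exact (mul_le_mul_of_nonneg_right (le_max_left _ _) (by positivity)).trans hn
  calc _ ≤ ‖A f - gδ‖ + c₀ * (n : ℝ) ^ (-(θh / 2)) * R f :=
        csInf_setOf_exists_eq_le (F := fun f => ‖A f - gδ‖ + c₀ * (n : ℝ) ^ (-(θh / 2)) * R f)
          (fun f _ => add_nonneg (norm_nonneg _) (mul_nonneg (by positivity) (hR0 f))) hfX
    _ ≤ δ + K * (n : ℝ) ^ (-(θh / 2)) :=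
        penalized_residual_le_of_norm_sub_le hθ0 hLA.le hLR.le hc₀.le hC₀.le hn1
          (hAH f (hfγ.trans_le (min_le_left _ _))) (hRH f (hfγ.trans_le (min_le_right _ _)))
          hgδ hf
    _ ≤ τ * δ := by linarith

/-- Quantitative termination of the discrepancy principle for the
modified (penalized) expanding neural network method: if `A` and `R ≥ 0` are locally
Hölder continuous of order `θ ∈ (0,1]` at `f†`, the network classes `X_{n,r(n)}`
approximate `f†` at rate `C₀/√n`, and `β_n = c₀ n^{−θ/2}`, then there is `C > 0` such
that for every `δ ∈ (0,1]`, every `g^δ` with `‖g^δ − g‖ ≤ δ` and every width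
`n ≥ C δ^{−2/θ}`, the minimal penalized residual over `X_{n,r(n)}` is `≤ τδ`.
Consequently the stopping width is `O(δ^{−2/θ})`. -/
theorem modified_discrepancy_principle_stopping_width_bound
    {d : ℕ} (hd : 1 ≤ d) (Ω : Set (Fin d → ℝ)) (hne : Ω.Nonempty) (hΩo : IsOpen Ω)
    (hΩb : IsBounded Ω)
    {Y : Type*} [NormedAddCommGroup Y] [NormedSpace ℝ Y]
    (A : Lp ℝ 2 (volume.restrict Ω) → Y)
    (fdag : Lp ℝ 2 (volume.restrict Ω))
    (θh : ℝ) (hθ0 : 0 < θh) (hθ1 : θh ≤ 1)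
    (LA γ₁ : ℝ) (hLA : 0 < LA) (hγ₁ : 0 < γ₁)
    (hAH : ∀ f : Lp ℝ 2 (volume.restrict Ω),
      ‖f - fdag‖ < γ₁ → ‖A f - A fdag‖ ≤ LA * ‖f - fdag‖ ^ θh)
    (R : Lp ℝ 2 (volume.restrict Ω) → ℝ) (hR0 : ∀ f, 0 ≤ R f)
    (LR γ₂ : ℝ) (hLR : 0 < LR) (hγ₂ : 0 < γ₂)
    (hRH : ∀ f : Lp ℝ 2 (volume.restrict Ω),
      ‖f - fdag‖ < γ₂ → |R f - R fdag| ≤ LR * ‖f - fdag‖ ^ θh)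
    (r : ℕ → ℝ) (hr : ∀ n, 0 < r n)
    (C₀ : ℝ) (hC₀ : 0 < C₀)
    (happrox : ∀ n : ℕ, 1 ≤ n →
      ∃ f ∈ Xlp Ω hΩo hΩb n (r n), ‖f - fdag‖ ≤ C₀ / Real.sqrt n)
    (τ : ℝ) (hτ : 1 < τ) (c₀ : ℝ) (hc₀ : 0 < c₀) :
    ∃ C : ℝ, 0 < C ∧
      ∀ δ : ℝ, 0 < δ → δ ≤ 1 → ∀ gδ : Y, ‖gδ - A fdag‖ ≤ δ →
        ∀ n : ℕ, C * δ ^ (-(2 / θh)) ≤ (n : ℝ) →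
          sInf {y : ℝ | ∃ f ∈ Xlp Ω hΩo hΩb n (r n),
              y = ‖A f - gδ‖ + (c₀ * (n : ℝ) ^ (-(θh / 2))) * R f} ≤ τ * δ :=
  modified_discrepancy_principle_stopping_width_bound_general Ω hΩo hΩb A fdag θh hθ0 LA γ₁ hLA hγ₁
    hAH R hR0 LR γ₂ hLR hγ₂ hRH r C₀ hC₀ happrox τ hτ c₀ hc₀

end
end
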